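/- arXiv:1110.0402 — 6 statements merged into one kernel-verified Lean document; each statement's English description precedes it below -/
import Mathlib

section
/- For every point v in ℝ² with 2 ≤ ‖v‖, the inequality √(2 - (‖v‖/2)²) - b·θ(v) - c·L(‖v‖/2) ≥ 0 holds when ‖v‖/2 ≥ h0, where θ(v) = arccos(‖v‖/(2√2)) is the angle at the origin between v and a point at distance √2 from the origin lying on the perpendicular bisector line of the segment from 0 to v, b = 4/3, and c = √3/3 - 2π/9. (Since ‖v‖/2 ≥ h0 implies L(‖v‖/2) = 0, the inequality reduces to √(2 - h²) ≥ (4/3)·arccos(h/√2) for h0 ≤ h ≤ √2, where h = ‖v‖/2.) -/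
noncomputable def Ltrunc (h : ℝ) : ℝ :=
  if h ≤ 1.26 then (1.26 - h) / (1.26 - 1) else 0

theorem typeC_segment_inequality (v : EuclideanSpace ℝ (Fin 2))
    (hv : 2 ≤ ‖v‖) (hh0 : 1.26 ≤ ‖v‖ / 2) :
    Real.sqrt (2 - (‖v‖ / 2) ^ 2) - (4 / 3) * Real.arccos (‖v‖ / (2 * Real.sqrt 2)) -
      (Real.sqrt 3 / 3 - 2 * Real.pi / 9) * Ltrunc (‖v‖ / 2) ≥ 0 := by
  set h : ℝ := ‖v‖ / 2 with hdef
  have hL : Ltrunc h = 0 := by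
    unfold Ltrunc
    split_ifs with h1
    · have : h = 1.26 := le_antisymm h1 hh0
      rw [this]; norm_num
    · rfl
  rw [hL, mul_zero, sub_zero]
  have hs2 : Real.sqrt 2 > 0 := Real.sqrt_pos.2 (by norm_num)
  have hs2sq : Real.sqrt 2 ^ 2 = 2 := Real.sq_sqrt (by norm_num)
  have hs2le : Real.sqrt 2 ≤ 1.4143 := by nlinarith [hs2sq, hs2.le]
  have hs2ge : 1.4142 ≤ Real.sqrt 2 := by nlinarith [hs2sq, hs2.le]
  have harg : ‖v‖ / (2 * Real.sqrt 2) = h / Real.sqrt 2 := by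
    rw [hdef]; field_simp
  rw [harg]
  by_cases hcase : Real.sqrt 2 < h
  · -- h > √2 : arccos term is 0
    have h1le : (1 : ℝ) ≤ h / Real.sqrt 2 := (one_le_div hs2).2 hcase.le
    rw [Real.arccos_eq_zero.2 h1le]
    simpa using Real.sqrt_nonneg (2 - h ^ 2)
  · push_neg at hcase
    have hx0 : 0 ≤ h / Real.sqrt 2 := by positivity
    have hx1 : h / Real.sqrt 2 ≤ 1 := (div_le_one hs2).2 hcase
    have hxlb : (0.8909 : ℝ) ≤ h / Real.sqrt 2 := by
      rw [le_div_iff₀ hs2]; nlinarith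
    set t : ℝ := Real.arccos (h / Real.sqrt 2) with tdef
    have ht0 : 0 ≤ t := Real.arccos_nonneg _
    have htpi : t ≤ Real.pi := Real.arccos_le_pi _
    have hcost : Real.cos t = h / Real.sqrt 2 := Real.cos_arccos (by linarith) hx1
    have hsint : Real.sin t = Real.sqrt (1 - (h / Real.sqrt 2) ^ 2) := by
      rw [tdef, Real.sin_arccos]
    have hkey : Real.sqrt (2 - h ^ 2) = Real.sqrt 2 * Real.sin t := by
      rw [hsint, ← Real.sqrt_mul (by norm_num : (0:ℝ) ≤ 2)]
      have h2 : (h / Real.sqrt 2) ^ 2 = h ^ 2 / 2 := by rw [div_pow, hs2sq]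
      rw [h2, hdef]
      ring
    rw [hkey]
    rcases eq_or_lt_of_le ht0 with heq | hpos
    · rw [← heq]; simp
    -- t < π/2 since cos t > 0
    have hcpos : 0 < Real.cos t := by rw [hcost]; positivity
    have htlt : t < Real.pi / 2 := by
      by_contra hc
      push_neg at hc
      have := Real.cos_nonpos_of_pi_div_two_le_of_le hc (by linarith [Real.pi_pos])
      linarith
    -- half angle u = t/2
    set u : ℝ := t / 2 with udef
    have hu0 : 0 < u := by positivity
    have hupi : u < Real.pi / 2 := by
      have := Real.pi_pos; rw [udef]; linarith
    have hcosu : 0 < Real.cos u := Real.cos_pos_of_mem_Ioo ⟨by linarith, hupi⟩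
    have hsinu : 0 < Real.sin u := Real.sin_pos_of_pos_of_lt_pi hu0 (by linarith [Real.pi_pos])
    have htan : u < Real.tan u := Real.lt_tan hu0 hupi
    have htanub : u * Real.cos u < Real.sin u := by
      rw [Real.tan_eq_sin_div_cos, lt_div_iff₀ hcosu] at htan
      exact htan
    have hsin2 : Real.sin t = 2 * Real.sin u * Real.cos u := by
      have : t = 2 * u := by rw [udef]; ring
      rw [this, Real.sin_two_mul]
    have hcos2 : Real.cos t = 2 * Real.cos u ^ 2 - 1 := by
      have : t = 2 * u := by rw [udef]; ring
      rw [this, Real.cos_two_mul]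
    -- cos u ^ 2 ≥ 0.94545
    have hcsq : (0.94545 : ℝ) ≤ Real.cos u ^ 2 := by
      have : (0.8909 : ℝ) ≤ 2 * Real.cos u ^ 2 - 1 := by
        rw [← hcos2, hcost]; exact hxlb
      linarith
    -- final inequality
    rw [hsin2]
    have hmain : Real.sqrt 2 * (2 * Real.sin u * Real.cos u) * Real.cos u ≥
        4 / 3 * (2 * Real.sin u) := by
      nlinarith [hsinu, hcosu, hs2ge, hcsq,
        mul_nonneg (sub_nonneg.2 hs2ge) (mul_nonneg (sq_nonneg (Real.cos u)) hsinu.le),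
        mul_nonneg (sub_nonneg.2 hcsq) hsinu.le]
    have ht2 : t < 2 * Real.sin u / Real.cos u := by
      rw [lt_div_iff₀ hcosu]; rw [udef] at htanub; linarith
    have h43 : 4 / 3 * t ≤ 4 / 3 * (2 * Real.sin u / Real.cos u) := by
      linarith
    have : 4 / 3 * (2 * Real.sin u / Real.cos u) ≤
        Real.sqrt 2 * (2 * Real.sin u * Real.cos u) := by
      rw [← mul_div_assoc, div_le_iff₀ hcosu]
      linarith [hmain]
    linarith
end

section
/- For all real h with 1 ≤ h ≤ 1.26, the function α(h) = arccos(h/2) - π/6 satisfies α(h) - 0.16·L(h) - 0.32 ≥ 0, where L(h) = (1.26 - h)/(1.26 - 1) for h ≤ 1.26 and L(h) = 0 otherwise. -/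
lemma arccos_key (x c : ℝ) (hc0 : 0 ≤ c) (hc1 : c ≤ 1) (hx1 : -1 ≤ x)
    (hx : x ≤ Real.sqrt 3 / 2 * (1 - c^2/2 - 5*c^4/96) - c/2) :
    Real.pi / 6 + c ≤ Real.arccos x := by
  have hπ : (3:ℝ) < Real.pi := Real.pi_gt_three
  have ht0 : (0:ℝ) ≤ Real.pi/6 + c := by linarith
  have htπ : Real.pi/6 + c ≤ Real.pi := by linarith
  have hcb : |Real.cos c - (1 - c^2/2)| ≤ |c|^4 * (5/96) :=
    Real.cos_bound (by rw [abs_of_nonneg hc0]; linarith)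
  rw [abs_of_nonneg hc0] at hcb
  have hcosb : 1 - c^2/2 - 5*c^4/96 ≤ Real.cos c := by
    have := (abs_le.mp hcb).1
    linarith
  have hsin : Real.sin c ≤ c := Real.sin_le hc0
  have hs3 : (0:ℝ) ≤ Real.sqrt 3 := Real.sqrt_nonneg 3
  have hcos : x ≤ Real.cos (Real.pi/6 + c) := by
    rw [Real.cos_add, Real.cos_pi_div_six, Real.sin_pi_div_six]
    nlinarith [hcosb, hsin, hs3, hx]
  rw [Real.arccos_eq_pi_div_two_sub_arcsin]
  have hm : Real.arcsin x ≤ Real.arcsin (Real.cos (Real.pi/6 + c)) :=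
    Real.monotone_arcsin hcos
  have he : Real.arcsin (Real.cos (Real.pi/6 + c)) = Real.pi/2 - (Real.pi/6 + c) := by
    rw [← Real.sin_pi_div_two_sub]
    exact Real.arcsin_sin (by linarith) (by linarith)
  linarith

theorem alpha_inequality (h : ℝ) (h1 : 1 ≤ h) (h2 : h ≤ 1.26) :
    (Real.arccos (h / 2) - Real.pi / 6) - 0.16 * Ltrunc h - 0.32 ≥ 0 := by
  have hs3 : (1.732:ℝ) ≤ Real.sqrt 3 := by
    nlinarith [Real.sq_sqrt (show (0:ℝ) ≤ 3 by norm_num), Real.sqrt_nonneg 3]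
  have hLt : Ltrunc h = (1.26 - h) / (1.26 - 1) := if_pos h2
  rw [hLt]
  have e : ((1.26:ℝ) - h) / (1.26 - 1) = (1.26 - h) * (50/13) := by norm_num; ring
  rw [e]
  have main : ∀ c : ℝ, 0 ≤ c → c ≤ 1 →
      h/2 ≤ 1.732/2 * (1 - c^2/2 - 5*c^4/96) - c/2 →
      Real.pi/6 + c ≤ Real.arccos (h/2) := by
    intro c hc0 hc1 hnum
    apply arccos_key _ _ hc0 hc1 (by linarith)
    have hB : (0:ℝ) ≤ 1 - c^2/2 - 5*c^4/96 := by nlinarith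
    nlinarith [hs3, hnum, hB]
  rcases le_or_gt h 1.0325 with hb | ha1
  · have := main 0.48 (by norm_num) (by norm_num) (by nlinarith)
    linarith
  rcases le_or_gt h 1.065 with hb | ha2
  · have := main 0.46 (by norm_num) (by norm_num) (by nlinarith)
    linarith
  rcases le_or_gt h 1.0975 with hb | ha3
  · have := main 0.44 (by norm_num) (by norm_num) (by nlinarith)
    linarith
  rcases le_or_gt h 1.13 with hb | ha4
  · have := main 0.42 (by norm_num) (by norm_num) (by nlinarith)
    linarith
  rcases le_or_gt h 1.1625 with hb | ha5
  · have := main 0.40 (by norm_num) (by norm_num) (by nlinarith)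
    linarith
  rcases le_or_gt h 1.195 with hb | ha6
  · have := main 0.38 (by norm_num) (by norm_num) (by nlinarith)
    linarith
  rcases le_or_gt h 1.2275 with hb | ha7
  · have := main 0.36 (by norm_num) (by norm_num) (by nlinarith)
    linarith
  · have := main 0.34 (by norm_num) (by norm_num) (by nlinarith)
    linarith
end

section
/- Let u, v ∈ ℝ² be nonzero points with 2 ≤ ‖u‖ ≤ 2.52, 2 ≤ ‖v‖ ≤ 2.52, and ‖u - v‖ ≥ 2. Then the angle θ between u and v at the origin satisfies θ ≥ (arccos(‖u‖/4) - π/6) + (arccos(‖v‖/4) - π/6). -/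
/-!
Write `A = arccos (‖u‖ / 4)` and `B = arccos (‖v‖ / 4)`; since `‖u‖, ‖v‖ ≥ 2` both lie in
`[0, π/3]`, so the claim `angle u v ≥ A + B - π/3` is trivial unless `A + B > π/3`.
The law of cosines with `‖u - v‖ ≥ 2` gives `cos (angle u v) ≤ (‖u‖² + ‖v‖² - 4) / (2‖u‖‖v‖)`,
and substituting `‖u‖ = 4 cos A`, `‖v‖ = 4 cos B` this bound is at most `cos (A + B - π/3)` because
of the identity
`8 cos A cos B cos (A + B - π/3) - (4 cos² A + 4 cos² B - 1)
  = 8 sin (A + B - π/6) sin (π/3 - A) sin (π/3 - B)`,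
whose right-hand side is a product of nonnegative factors.
-/

open Real InnerProductGeometry

theorem cos_angle_le_of_le_norm_sub {V : Type*} [NormedAddCommGroup V] [InnerProductSpace ℝ V]
    {u v : V} {d : ℝ} (hd : 0 ≤ d) (h : d ≤ ‖u - v‖) :
    cos (angle u v) ≤ (‖u‖ ^ 2 + ‖v‖ ^ 2 - d ^ 2) / (2 * (‖u‖ * ‖v‖)) := by
  have hinner : inner ℝ u v ≤ (‖u‖ ^ 2 + ‖v‖ ^ 2 - d ^ 2) / 2 := by
    nlinarith [norm_sub_sq_real u v, pow_le_pow_left₀ hd h 2]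
  rw [cos_angle, ← div_div _ (2 : ℝ)]
  exact div_le_div_of_nonneg_right hinner (by positivity)

theorem le_angle_of_cos_angle_le {V : Type*} [NormedAddCommGroup V] [InnerProductSpace ℝ V]
    {u v : V} {x : ℝ} (hx₀ : 0 ≤ x) (hx : x ≤ π) (h : cos (angle u v) ≤ cos x) :
    x ≤ angle u v :=
  calc x = arccos (cos x) := (arccos_cos hx₀ hx).symm
    _ ≤ arccos (cos (angle u v)) := arccos_le_arccos h
    _ = angle u v := arccos_cos (angle_nonneg u v) (angle_le_pi u v)

theorem cos_mul_cos_mul_cos_sub_pi_div_three (A B : ℝ) :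
    8 * cos A * cos B * cos (A + B - π / 3) - (4 * cos A ^ 2 + 4 * cos B ^ 2 - 1) =
      8 * sin (A + B - π / 6) * sin (π / 3 - A) * sin (π / 3 - B) := by
  have hA := sin_sq_add_cos_sq A
  have hB := sin_sq_add_cos_sq B
  have h3 : √3 ^ 2 = 3 := sq_sqrt (by norm_num)
  simp only [cos_sub, sin_sub, cos_add, sin_add, cos_pi_div_three, sin_pi_div_three,
    cos_pi_div_six, sin_pi_div_six]
  linear_combination (cos B ^ 2 * √3 ^ 2 - sin B ^ 2) * hA
    + (cos A ^ 2 * √3 ^ 2 - 1 + cos A ^ 2) * hB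
    + (-cos A * sin A * cos B ^ 2 * √3 + cos A * sin A * cos B * sin B
      - cos A ^ 2 * cos B * sin B * √3 - cos A ^ 2 * cos B ^ 2 + cos B ^ 2 + cos A ^ 2) * h3

theorem four_cos_sq_add_four_cos_sq_sub_one_le {A B : ℝ} (hA₀ : 0 ≤ A) (hA : A ≤ π / 3)
    (hB₀ : 0 ≤ B) (hB : B ≤ π / 3) (hAB : π / 6 ≤ A + B) :
    4 * cos A ^ 2 + 4 * cos B ^ 2 - 1 ≤ 8 * cos A * cos B * cos (A + B - π / 3) := by
  have hsum : 0 ≤ sin (A + B - π / 6) := sin_nonneg_of_nonneg_of_le_pi (by linarith) (by linarith)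
  have hA' : 0 ≤ sin (π / 3 - A) := sin_nonneg_of_nonneg_of_le_pi (by linarith) (by linarith)
  have hB' : 0 ≤ sin (π / 3 - B) := sin_nonneg_of_nonneg_of_le_pi (by linarith) (by linarith)
  have := cos_mul_cos_mul_cos_sub_pi_div_three A B
  nlinarith [mul_nonneg (mul_nonneg hsum hA') hB']

theorem arccos_div_four_le_pi_div_three {a : ℝ} (ha : 2 ≤ a) : arccos (a / 4) ≤ π / 3 := by
  calc arccos (a / 4) ≤ arccos (1 / 2) := arccos_le_arccos (by linarith)
    _ = π / 3 := arccos_eq_of_eq_cos (by positivity) (by linarith [pi_pos]) cos_pi_div_three.symm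

theorem sq_add_sq_sub_two_sq_div_le_cos {a b : ℝ} (ha : 2 ≤ a) (ha₄ : a ≤ 4)
    (hb : 2 ≤ b) (hb₄ : b ≤ 4) (hab : π / 6 ≤ arccos (a / 4) + arccos (b / 4)) :
    (a ^ 2 + b ^ 2 - 2 ^ 2) / (2 * (a * b)) ≤
      cos (arccos (a / 4) + arccos (b / 4) - π / 3) := by
  have key := four_cos_sq_add_four_cos_sq_sub_one_le (arccos_nonneg _)
    (arccos_div_four_le_pi_div_three ha) (arccos_nonneg _) (arccos_div_four_le_pi_div_three hb) hab
  rw [cos_arccos (by linarith) (by linarith), cos_arccos (by linarith) (by linarith)] at key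
  rw [div_le_iff₀ (by positivity)]
  nlinarith

theorem angle_ge_alpha_sum_general (u v : EuclideanSpace ℝ (Fin 2))
    (hu1 : 2 ≤ ‖u‖)
    (hv1 : 2 ≤ ‖v‖)
    (huv : 2 ≤ ‖u - v‖) :
    InnerProductGeometry.angle u v ≥
      (Real.arccos (‖u‖ / 4) - Real.pi / 6) + (Real.arccos (‖v‖ / 4) - Real.pi / 6) := by
  set A := arccos (‖u‖ / 4)
  set B := arccos (‖v‖ / 4)
  have hA : A ≤ π / 3 := arccos_div_four_le_pi_div_three hu1
  have hB : B ≤ π / 3 := arccos_div_four_le_pi_div_three hv1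
  rcases le_or_gt (A + B - π / 3) 0 with hAB | hAB
  · linarith [angle_nonneg u v]
  have hu4 : ‖u‖ ≤ 4 := by
    by_contra! h
    linarith [arccos_of_one_le (x := ‖u‖ / 4) (by linarith)]
  have hv4 : ‖v‖ ≤ 4 := by
    by_contra! h
    linarith [arccos_of_one_le (x := ‖v‖ / 4) (by linarith)]
  have hcos : cos (angle u v) ≤ cos (A + B - π / 3) :=
    (cos_angle_le_of_le_norm_sub zero_le_two huv).trans
      (sq_add_sq_sub_two_sq_div_le_cos hu1 hu4 hv1 hv4 (by linarith))
  linarith [le_angle_of_cos_angle_le hAB.le (by linarith [pi_pos]) hcos]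

theorem angle_ge_alpha_sum (u v : EuclideanSpace ℝ (Fin 2))
    (hu0 : u ≠ 0) (hv0 : v ≠ 0)
    (hu1 : 2 ≤ ‖u‖) (hu2 : ‖u‖ ≤ 2.52)
    (hv1 : 2 ≤ ‖v‖) (hv2 : ‖v‖ ≤ 2.52)
    (huv : 2 ≤ ‖u - v‖) :
    InnerProductGeometry.angle u v ≥
      (Real.arccos (‖u‖ / 4) - Real.pi / 6) + (Real.arccos (‖v‖ / 4) - Real.pi / 6) :=
  angle_ge_alpha_sum_general u v hu1 hv1 huv
end

section
/- Let u, v ∈ ℝ² with 2 ≤ ‖u‖ ≤ 2.52 and 2 ≤ ‖v‖ ≤ 2.52 and ‖u - v‖ ≥ 2. Then the angle between u and v at the origin is greater than π/4. -/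
open InnerProductGeometry Real

open scoped RealInnerProductSpace

lemma pi_div_four_lt_angle_of_two_mul_inner_lt {V : Type*} [NormedAddCommGroup V]
    [InnerProductSpace ℝ V] {u v : V} (h : 2 * ⟪u, v⟫ < √2 * (‖u‖ * ‖v‖)) :
    π / 4 < angle u v := by
  have hpos : 0 < ‖u‖ * ‖v‖ := by
    refine lt_of_le_of_ne (by positivity) fun h0 => ?_
    rcases mul_eq_zero.mp h0.symm with hu | hv
    · simp [norm_eq_zero.mp hu] at h
    · simp [norm_eq_zero.mp hv] at h
  have hcos : cos (angle u v) < cos (π / 4) := by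
    rw [cos_angle, cos_pi_div_four, div_lt_iff₀ hpos]
    linarith
  by_contra! hle
  exact hcos.not_ge <| cos_le_cos_of_nonneg_of_le_pi (angle_nonneg u v)
    (by linarith [pi_pos]) hle

/-- The quadratic form `a² + b² - √2 a b` is convex in each variable, so it suffices to check
the corners of the square; at the outer corner `2 · 2.52² - 4 < √2 · 2.52²` holds since
`2.52² < 4 / (2 - √2)`. -/
lemma sq_add_sq_sub_four_lt_sqrt_two_mul {a b : ℝ} (ha : a ∈ Set.Icc 2 2.52)
    (hb : b ∈ Set.Icc 2 2.52) : a ^ 2 + b ^ 2 - 4 < √2 * (a * b) := by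
  obtain ⟨ha1, ha2⟩ := ha
  obtain ⟨hb1, hb2⟩ := hb
  have hsqrt : (1.414 : ℝ) < √2 := by
    rw [lt_sqrt (by norm_num)]
    norm_num
  nlinarith [mul_nonneg (sub_nonneg.2 ha1) (sub_nonneg.2 hb1),
    mul_nonneg (sub_nonneg.2 ha2) (sub_nonneg.2 hb2),
    mul_nonneg (sub_nonneg.2 ha1) (sub_nonneg.2 ha2),
    mul_nonneg (sub_nonneg.2 hb1) (sub_nonneg.2 hb2),
    mul_pos (by linarith : (0 : ℝ) < a) (by linarith : (0 : ℝ) < b)]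

theorem angle_gt_pi_div_four (u v : EuclideanSpace ℝ (Fin 2))
    (hu1 : 2 ≤ ‖u‖) (hu2 : ‖u‖ ≤ 2.52)
    (hv1 : 2 ≤ ‖v‖) (hv2 : ‖v‖ ≤ 2.52)
    (huv : 2 ≤ ‖u - v‖) :
    InnerProductGeometry.angle u v > Real.pi / 4 := by
  apply pi_div_four_lt_angle_of_two_mul_inner_lt
  have hsep : 4 ≤ ‖u - v‖ ^ 2 := by nlinarith
  have hnorms := sq_add_sq_sub_four_lt_sqrt_two_mul ⟨hu1, hu2⟩ ⟨hv1, hv2⟩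
  linarith [norm_sub_sq_real u v]
end

section
/- Let V be a finite set of points in ℝ² contained in the closed annulus {x : 2 ≤ ‖x‖ ≤ 2.52}, with ‖u - v‖ ≥ 2 for all distinct u, v ∈ V. Then V has cardinality at most 7. -/
/-!
By the law of cosines, two points of the annulus at distance at least `2` subtend an angle
greater than `π / 4` at the origin. Measuring arguments from one point `z₀` of `V`, the other
points have arguments in `(π / 4, 7π / 4)`, pairwise more than `π / 4` apart, so at most six of
them fit.
-/
open Real InnerProductGeometry

theorem Finset.card_le_of_mem_Ico_of_le_abs_sub {ι : Type*} {S : Finset ι} {f : ι → ℝ} {a w : ℝ}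
    {m : ℕ} (hw : 0 < w) (hf : ∀ i ∈ S, f i ∈ Set.Ico a (a + m * w))
    (hsep : ∀ i ∈ S, ∀ j ∈ S, i ≠ j → w ≤ |f i - f j|) : S.card ≤ m := by
  set bin : ι → ℤ := fun i => ⌊(f i - a) / w⌋
  have hbin : Set.MapsTo bin S (Finset.Ico 0 (m : ℤ)) := by
    intro i hi
    obtain ⟨hai, hib⟩ := hf i hi
    simp only [Finset.coe_Ico, Set.mem_Ico, bin, Int.floor_nonneg, Int.floor_lt]
    constructor
    · exact div_nonneg (by linarith) hw.le
    · rw [div_lt_iff₀ hw]; push_cast; linarith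
  by_contra! hcard
  obtain ⟨i, hi, j, hj, hij, hbij⟩ :=
    Finset.exists_ne_map_eq_of_card_lt_of_maps_to (by simpa using hcard) hbin
  have hlt : |(f i - a) / w - (f j - a) / w| < 1 := Int.abs_sub_lt_one_of_floor_eq_floor hbij
  rw [← sub_div, abs_div, abs_of_pos hw, div_lt_one hw, sub_sub_sub_cancel_right] at hlt
  exact (hsep i hi j hj hij).not_gt hlt

theorem Real.Angle.abs_toReal_coe_le (θ : ℝ) : |(θ : Real.Angle).toReal| ≤ |θ| := by
  rcases lt_or_ge |θ| π with h | h
  · rw [toReal_coe_eq_self_iff.2 ⟨(abs_lt.1 h).1, (abs_lt.1 h).2.le⟩]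
  · exact (abs_toReal_le_pi _).trans h

theorem Complex.angle_le_abs_of_coe_eq_arg_sub {z w : ℂ} (hz : z ≠ 0) (hw : w ≠ 0) {θ : ℝ}
    (hθ : (θ : Real.Angle) = arg z - arg w) : angle z w ≤ |θ| := by
  rw [angle_eq_abs_arg hz hw, ← arg_coe_angle_toReal_eq_arg, arg_div_coe_angle hz hw, ← hθ]
  exact Real.Angle.abs_toReal_coe_le θ

theorem Complex.card_le_of_lt_angle {S : Finset ℂ} {n : ℕ} (hn : n ≠ 0) (h0 : 0 ∉ S)
    (hS : ∀ z ∈ S, ∀ w ∈ S, z ≠ w → 2 * π / (n + 1) < angle z w) : S.card ≤ n := by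
  rcases S.eq_empty_or_nonempty with rfl | ⟨z₀, hz₀⟩
  · simp
  have hne : ∀ z ∈ S, z ≠ 0 := fun z hz h => h0 (h ▸ hz)
  set w := 2 * π / (n + 1)
  have hw : 0 < w := by positivity
  have hnw : (n + 1) * w = 2 * π := mul_div_cancel₀ _ (by positivity)
  set θ : ℂ → ℝ := fun z => toIcoMod two_pi_pos 0 (arg z - arg z₀)
  have hθ : ∀ z, (θ z : Real.Angle) = arg z - arg z₀ := by
    intro z; simp [θ, Real.Angle.coe_toIcoMod]
  have hθ_mem : ∀ z ∈ S.erase z₀, θ z ∈ Set.Ico w (w + ((n - 1 : ℕ) : ℝ) * w) := by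
    intro z hz
    obtain ⟨hzz₀, hzS⟩ := Finset.mem_erase.1 hz
    obtain ⟨h0θ, hθ2π⟩ : θ z ∈ Set.Ico 0 (2 * π) := toIcoMod_mem_Ico' two_pi_pos _
    have hlow := (hS z hzS z₀ hz₀ hzz₀).trans_le
      (Complex.angle_le_abs_of_coe_eq_arg_sub (hne z hzS) (hne z₀ hz₀) (hθ z))
    have hhigh := (hS z hzS z₀ hz₀ hzz₀).trans_le
      (Complex.angle_le_abs_of_coe_eq_arg_sub (hne z hzS) (hne z₀ hz₀) (θ := θ z - 2 * π)
        (by simp [hθ z]))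
    rw [abs_of_nonneg h0θ] at hlow
    rw [abs_of_neg (by linarith)] at hhigh
    rw [Nat.cast_sub (Nat.one_le_iff_ne_zero.2 hn), Nat.cast_one]
    constructor <;> linarith
  have hsep : ∀ x ∈ S.erase z₀, ∀ y ∈ S.erase z₀, x ≠ y → w ≤ |θ x - θ y| := by
    intro x hx y hy hxy
    have hxS := Finset.mem_of_mem_erase hx
    have hyS := Finset.mem_of_mem_erase hy
    refine (hS x hxS y hyS hxy).le.trans
      (Complex.angle_le_abs_of_coe_eq_arg_sub (hne x hxS) (hne y hyS) ?_)
    rw [Real.Angle.coe_sub, hθ, hθ]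
    abel
  have := Finset.card_le_of_mem_Ico_of_le_abs_sub hw hθ_mem hsep
  rw [Finset.card_erase_of_mem hz₀] at this
  omega

theorem pi_div_four_lt_angle_of_mem_annulus {E : Type*} [NormedAddCommGroup E]
    [InnerProductSpace ℝ E] {x y : E} (hx : 2 ≤ ‖x‖ ∧ ‖x‖ ≤ 2.52) (hy : 2 ≤ ‖y‖ ∧ ‖y‖ ≤ 2.52)
    (hxy : 2 ≤ ‖x - y‖) : π / 4 < angle x y := by
  have hxy_pos : 0 < ‖x‖ * ‖y‖ := by nlinarith
  have hsqrt : (1.4 : ℝ) < √2 := (lt_sqrt (by norm_num)).2 (by norm_num)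
  -- `2 * ⟪x, y⟫ = ‖x‖² + ‖y‖² - ‖x - y‖²`, and `a² + b² - 4 < 1.4 * a * b` on `[2, 2.52]²`
  have hinner : inner ℝ x y < √2 / 2 * (‖x‖ * ‖y‖) := by
    have := norm_sub_sq_real x y
    nlinarith [mul_nonneg (sub_nonneg.2 hx.2) (sub_nonneg.2 hx.1),
      mul_nonneg (sub_nonneg.2 hy.2) (sub_nonneg.2 hy.1),
      mul_nonneg (sub_nonneg.2 hx.2) (sub_nonneg.2 hy.2),
      mul_nonneg (sub_nonneg.2 hx.1) (sub_nonneg.2 hy.1)]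
  by_contra! hle
  have hcos : cos (π / 4) ≤ cos (angle x y) :=
    cos_le_cos_of_nonneg_of_le_pi (angle_nonneg x y) (by linarith [pi_pos]) hle
  rw [cos_pi_div_four, cos_angle, le_div_iff₀ hxy_pos] at hcos
  exact hcos.not_gt hinner

theorem EuclideanSpace.card_le_of_lt_angle {S : Finset (EuclideanSpace ℝ (Fin 2))} {n : ℕ}
    (hn : n ≠ 0) (h0 : 0 ∉ S)
    (hS : ∀ x ∈ S, ∀ y ∈ S, x ≠ y → 2 * π / (n + 1) < angle x y) : S.card ≤ n := by
  set e : EuclideanSpace ℝ (Fin 2) →ₗᵢ[ℝ] ℂ :=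
    Complex.orthonormalBasisOneI.repr.symm.toLinearIsometry
  rw [← Finset.card_image_of_injective S e.injective]
  refine Complex.card_le_of_lt_angle hn ?_ ?_
  · rw [Finset.mem_image]
    rintro ⟨x, hx, hx0⟩
    exact h0 (e.injective (hx0.trans e.map_zero.symm) ▸ hx)
  · simp only [Finset.mem_image]
    rintro _ ⟨x, hx, rfl⟩ _ ⟨y, hy, rfl⟩ hxy
    rw [e.angle_map]
    exact hS x hx y hy (ne_of_apply_ne e hxy)

theorem annulus_packing_card_le_seven (V : Finset (EuclideanSpace ℝ (Fin 2)))
    (hann : ∀ v ∈ V, 2 ≤ ‖v‖ ∧ ‖v‖ ≤ 2.52)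
    (hsep : ∀ u ∈ V, ∀ v ∈ V, u ≠ v → 2 ≤ ‖u - v‖) :
    V.card ≤ 7 := by
  refine EuclideanSpace.card_le_of_lt_angle (by norm_num) (fun h0 => ?_) fun u hu v hv huv => ?_
  · have := (hann 0 h0).1
    norm_num at this
  · convert pi_div_four_lt_angle_of_mem_annulus (hann u hu) (hann v hv) (hsep u hu v hv huv) using 1
    ring
end

section
/- In a configuration of four unit-sphere points on the sphere of radius 2 centered at the origin forming a contact rhombus (four points v₁, v₂, v₃, v₄ with ‖vᵢ‖ = 2, consecutive distances ‖vᵢ - vᵢ₊₁‖ = 2, and diagonal distances ≥ 2), the spherical angles at opposite vertices of the rhombus are equal. -/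
/-- The spherical angle at vertex `v` between the great-circle arcs towards
`u` and `w`, i.e. the angle between the projections of `u` and `w` onto the
orthogonal complement of `v`. -/
noncomputable def sphAngle (v u w : EuclideanSpace ℝ (Fin 3)) : ℝ :=
  InnerProductGeometry.angle
    (u - ((inner ℝ u v : ℝ) / (inner ℝ v v : ℝ)) • v)
    (w - ((inner ℝ w v : ℝ) / (inner ℝ v v : ℝ)) • v)

lemma sphAngle_eq_arccos (c a b : EuclideanSpace ℝ (Fin 3))
    (hc : ‖c‖ = 2) (ha : ‖a‖ = 2) (hb : ‖b‖ = 2)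
    (hac : (inner ℝ a c : ℝ) = 2) (hbc : (inner ℝ b c : ℝ) = 2) :
    sphAngle c a b = Real.arccos (((inner ℝ a b : ℝ) - 1) / 3) := by
  have hcc : (inner ℝ c c : ℝ) = 4 := by
    rw [real_inner_self_eq_norm_sq, hc]; norm_num
  have haa : (inner ℝ a a : ℝ) = 4 := by
    rw [real_inner_self_eq_norm_sq, ha]; norm_num
  have hbb : (inner ℝ b b : ℝ) = 4 := by
    rw [real_inner_self_eq_norm_sq, hb]; norm_num
  have hca : (inner ℝ c a : ℝ) = 2 := by rw [real_inner_comm]; exact hac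
  have hcb : (inner ℝ c b : ℝ) = 2 := by rw [real_inner_comm]; exact hbc
  set a' := a - ((inner ℝ a c : ℝ) / (inner ℝ c c : ℝ)) • c with ha'
  set b' := b - ((inner ℝ b c : ℝ) / (inner ℝ c c : ℝ)) • c with hb'
  have hinner : (inner ℝ a' b' : ℝ) = (inner ℝ a b : ℝ) - 1 := by
    simp only [ha', hb', inner_sub_left, inner_sub_right, real_inner_smul_left,
      real_inner_smul_right, hac, hbc, hcc, hca, hcb]
    ring
  have hna : ‖a'‖ = Real.sqrt 3 := by
    have h2 : (inner ℝ a' a' : ℝ) = 3 := by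
      simp only [ha', inner_sub_left, inner_sub_right, real_inner_smul_left,
        real_inner_smul_right, hac, hcc, haa, hca]
      ring
    rw [norm_eq_sqrt_real_inner, h2]
  have hnb : ‖b'‖ = Real.sqrt 3 := by
    have h2 : (inner ℝ b' b' : ℝ) = 3 := by
      simp only [hb', inner_sub_left, inner_sub_right, real_inner_smul_left,
        real_inner_smul_right, hbc, hcc, hbb, hcb]
      ring
    rw [norm_eq_sqrt_real_inner, h2]
  have h3 : Real.sqrt 3 * Real.sqrt 3 = 3 := by
    rw [← Real.sqrt_mul_self (by norm_num : (0:ℝ) ≤ 3)]; norm_num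
  rw [sphAngle, InnerProductGeometry.angle, ← ha', ← hb', hinner, hna, hnb, h3]

theorem rhombus_opposite_angles_eq (v : Fin 4 → EuclideanSpace ℝ (Fin 3))
    (hnorm : ∀ i, ‖v i‖ = 2)
    (hside : ∀ i : Fin 4, ‖v i - v (i + 1)‖ = 2)
    (hdiag : 2 ≤ ‖v 0 - v 2‖) (hdiag' : 2 ≤ ‖v 1 - v 3‖) :
    sphAngle (v 0) (v 3) (v 1) = sphAngle (v 2) (v 1) (v 3) ∧
    sphAngle (v 1) (v 0) (v 2) = sphAngle (v 3) (v 2) (v 0) := by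
  have hinner : ∀ i : Fin 4, (inner ℝ (v i) (v (i + 1)) : ℝ) = 2 := by
    intro i
    have h := hside i
    have h2 : ‖v i - v (i + 1)‖ ^ 2 = 4 := by rw [h]; norm_num
    rw [norm_sub_sq_real, hnorm i, hnorm (i + 1)] at h2
    linarith
  have h01 : (inner ℝ (v 0) (v 1) : ℝ) = 2 := hinner 0
  have h12 : (inner ℝ (v 1) (v 2) : ℝ) = 2 := hinner 1
  have h23 : (inner ℝ (v 2) (v 3) : ℝ) = 2 := hinner 2
  have h30 : (inner ℝ (v 3) (v 0) : ℝ) = 2 := hinner 3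
  have h10 : (inner ℝ (v 1) (v 0) : ℝ) = 2 := by rw [real_inner_comm]; exact h01
  have h21 : (inner ℝ (v 2) (v 1) : ℝ) = 2 := by rw [real_inner_comm]; exact h12
  have h32 : (inner ℝ (v 3) (v 2) : ℝ) = 2 := by rw [real_inner_comm]; exact h23
  have h03 : (inner ℝ (v 0) (v 3) : ℝ) = 2 := by rw [real_inner_comm]; exact h30
  constructor
  · rw [sphAngle_eq_arccos (v 0) (v 3) (v 1) (hnorm 0) (hnorm 3) (hnorm 1) h30 h10,
      sphAngle_eq_arccos (v 2) (v 1) (v 3) (hnorm 2) (hnorm 1) (hnorm 3) h12 h32,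
      real_inner_comm (v 3) (v 1)]
  · rw [sphAngle_eq_arccos (v 1) (v 0) (v 2) (hnorm 1) (hnorm 0) (hnorm 2) h01 h21,
      sphAngle_eq_arccos (v 3) (v 2) (v 0) (hnorm 3) (hnorm 2) (hnorm 0) h23 h03,
      real_inner_comm (v 0) (v 2)]
end
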